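/- arXiv:0801.4329 — 5 statements merged into one kernel-verified Lean document; each statement's English description precedes it below -/
import Mathlib

section
/- Let h_t = 1 − e^{2πit/n} for t = 1,…,n and let τ ≥ 1 be an integer. Then for every Fourier frequency λ_j = 2πj/n with j an integer such that 1 ≤ j ≤ ⌊(n−1)/2⌋, one has Σ_{t=1}^n h_t^τ e^{itλ_j} = 0 whenever j ≤ ⌊(n−1)/2⌋ − τ. In particular the tapered DFT at such Fourier frequencies is invariant to addition of a constant to the data. -/
open Real Complex Finset

/-! The binomial theorem turns `(1 - ζ^t)^τ ζ^{jt}`, with `ζ = e^{2πi/n}`, into a combination of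
the characters `t ↦ ζ^{(j+k)t}`, `0 ≤ k ≤ τ`. Since `1 ≤ j + k ≤ j + τ < n`, each `ζ^{j+k}` is an
`n`-th root of unity different from `1`, so its geometric sum over a full period vanishes. -/

theorem geom_sum_eq_zero_of_pow_eq_one {R : Type*} [Ring R] [NoZeroDivisors R] {u : R} {n : ℕ}
    (hun : u ^ n = 1) (hu : u ≠ 1) : ∑ t ∈ range n, u ^ t = 0 := by
  have h := geom_sum_mul u n
  rw [hun, sub_self] at h
  exact (mul_eq_zero.mp h).resolve_right (sub_ne_zero.mpr hu)

theorem sum_Icc_pow_eq_zero_of_pow_eq_one {R : Type*} [Ring R] [NoZeroDivisors R] {u : R}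
    {n : ℕ} (hun : u ^ n = 1) (hu : u ≠ 1) : ∑ t ∈ Icc 1 n, u ^ t = 0 := by
  rw [← Ico_add_one_right_eq_Icc, sum_Ico_eq_sum_range, Nat.add_sub_cancel]
  simp only [pow_add, pow_one, ← mul_sum, geom_sum_eq_zero_of_pow_eq_one hun hu, mul_zero]

theorem sum_one_sub_pow_pow_mul_pow {R : Type*} [CommRing R] (s : Finset ℕ) (ζ : R)
    (τ j : ℕ) :
    ∑ t ∈ s, (1 - ζ ^ t) ^ τ * (ζ ^ j) ^ t =
      ∑ k ∈ range (τ + 1), (-1) ^ k * (τ.choose k : R) * ∑ t ∈ s, (ζ ^ (k + j)) ^ t := by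
  simp only [mul_sum]
  rw [sum_comm]
  refine sum_congr rfl fun t _ => ?_
  rw [sub_eq_add_neg, add_comm, add_pow, sum_mul]
  refine sum_congr rfl fun k _ => ?_
  rw [neg_pow, one_pow, mul_one, ← pow_mul, ← pow_mul, ← pow_mul]
  ring

theorem IsPrimitiveRoot.sum_Icc_one_sub_pow_pow_mul_pow_eq_zero {R : Type*} [CommRing R]
    [IsDomain R] {ζ : R} {n : ℕ} (hζ : IsPrimitiveRoot ζ n) {τ j : ℕ} (hj : 1 ≤ j)
    (hjτ : j + τ < n) : ∑ t ∈ Icc 1 n, (1 - ζ ^ t) ^ τ * (ζ ^ j) ^ t = 0 := by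
  rw [sum_one_sub_pow_pow_mul_pow]
  refine sum_eq_zero fun k hk => ?_
  have hk : k ≤ τ := Nat.lt_succ_iff.mp (mem_range.mp hk)
  have hun : (ζ ^ (k + j)) ^ n = 1 := by rw [← pow_mul, mul_comm, pow_mul, hζ.pow_eq_one, one_pow]
  have hu : ζ ^ (k + j) ≠ 1 := hζ.pow_ne_one_of_pos_of_lt (by omega) (by omega)
  rw [sum_Icc_pow_eq_zero_of_pow_eq_one hun hu, mul_zero]

theorem hurvich_chen_taper_orthogonality_general
    (n τ j : ℕ) (hj1 : 1 ≤ j) (hj2 : j + τ ≤ (n - 1) / 2) :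
    (∑ t ∈ Finset.Icc 1 n,
        (1 - Complex.exp (2 * π * Complex.I * t / n)) ^ τ *
          Complex.exp (Complex.I * t * (2 * π * j / n)) = 0) ∧
    (∀ (x : ℕ → ℂ) (c : ℂ),
      ∑ t ∈ Finset.Icc 1 n,
          (1 - Complex.exp (2 * π * Complex.I * t / n)) ^ τ * (x t + c) *
            Complex.exp (Complex.I * t * (2 * π * j / n))
        = ∑ t ∈ Finset.Icc 1 n,
            (1 - Complex.exp (2 * π * Complex.I * t / n)) ^ τ * x t *
              Complex.exp (Complex.I * t * (2 * π * j / n))) := by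
  have hn : n ≠ 0 := by omega
  have hζ := Complex.isPrimitiveRoot_exp n hn
  have hexp : ∀ m : ℕ, Complex.exp (2 * π * I / n) ^ m = Complex.exp (2 * π * I * m / n) := by
    intro m
    rw [← Complex.exp_nat_mul]
    ring_nf
  have hvanish : ∑ t ∈ Icc 1 n, (1 - Complex.exp (2 * π * I * t / n)) ^ τ *
      Complex.exp (I * t * (2 * π * j / n)) = 0 := by
    rw [← hζ.sum_Icc_one_sub_pow_pow_mul_pow_eq_zero (τ := τ) hj1 (by omega)]
    refine sum_congr rfl fun t _ => ?_
    rw [← pow_mul, hexp, hexp]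
    push_cast
    ring_nf
  refine ⟨hvanish, fun x c => ?_⟩
  simp only [mul_add, add_mul, sum_add_distrib, mul_right_comm _ c, ← sum_mul, hvanish, zero_mul,
    add_zero]

/-- For the Hurvich–Chen taper `h_t = 1 − e^{2πit/n}` of order `τ ≥ 1`, the tapered
Fourier transform vanishes at Fourier frequencies `λ_j = 2πj/n` with
`1 ≤ j ≤ ⌊(n−1)/2⌋ − τ`; in particular the tapered DFT at such frequencies is
invariant to addition of a constant to the data. -/
theorem hurvich_chen_taper_orthogonality
    (n τ j : ℕ) (hn : 1 ≤ n) (hτ : 1 ≤ τ) (hj1 : 1 ≤ j) (hj2 : j + τ ≤ (n - 1) / 2) :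
    (∑ t ∈ Finset.Icc 1 n,
        (1 - Complex.exp (2 * π * Complex.I * t / n)) ^ τ *
          Complex.exp (Complex.I * t * (2 * π * j / n)) = 0) ∧
    (∀ (x : ℕ → ℂ) (c : ℂ),
      ∑ t ∈ Finset.Icc 1 n,
          (1 - Complex.exp (2 * π * Complex.I * t / n)) ^ τ * (x t + c) *
            Complex.exp (Complex.I * t * (2 * π * j / n))
        = ∑ t ∈ Finset.Icc 1 n,
            (1 - Complex.exp (2 * π * Complex.I * t / n)) ^ τ * x t *
              Complex.exp (Complex.I * t * (2 * π * j / n))) :=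
  hurvich_chen_taper_orthogonality_general n τ j hj1 hj2
end

section
/- Let Z_1,…,Z_n be i.i.d. standard complex-normal-like real white noise and τ ≥ 1. The covariance of tapered DFT coefficients of a white noise at Fourier frequencies λ_j, λ_k satisfies E[D^Z_τ(λ_j) conj(D^Z_τ(λ_k))] = 0 whenever |j − k| > τ, and equals (2π a_τ)^{−1}(−1)^{k−j} binom(2τ, τ + (k−j)) σ²/n-normalized when |j − k| ≤ τ. -/
/-!
With `ζ = exp (2πi/n)` we have `h_t = 1 - ζ^t` and `exp (i t λ_j) = ζ^(t j)`, so uncorrelatedness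
of the `Z_t` collapses the covariance to `σ² / (2π n a) · ∑_t |1 - ζ^t|^(2τ) ζ^(t (j - k))`.
On the unit circle `|1 - x|^(2τ) = (1 - x)^τ (1 - x⁻¹)^τ = ∑_{|i| ≤ τ} (-1)^i C(2τ, τ + i) x^i`,
and summing over the `n`-th roots of unity `ζ^t` keeps only the coefficient of `x^(k - j)`:
the condition `2τ < n` together with `j, k ≤ (n - 1)/2` rules out aliasing.
-/

open Real MeasureTheory Finset ComplexConjugate

theorem IsPrimitiveRoot.sum_Icc_pow_zpow_eq_ite {K : Type*} [Field K] {ζ : K} {n : ℕ}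
    (hζ : IsPrimitiveRoot ζ n) (r : ℤ) :
    ∑ t ∈ Icc 1 n, (ζ ^ t) ^ r = if (n : ℤ) ∣ r then (n : K) else 0 := by
  have hswap : ∀ t : ℕ, (ζ ^ t) ^ r = (ζ ^ r) ^ t := fun t => by
    rw [← zpow_natCast, ← zpow_natCast, ← zpow_mul, ← zpow_mul, mul_comm]
  simp_rw [hswap]
  split_ifs with hdvd
  · simp [(hζ.zpow_eq_one_iff_dvd r).2 hdvd]
  · have hne : ζ ^ r ≠ 1 := mt (hζ.zpow_eq_one_iff_dvd r).1 hdvd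
    have hperiod : (ζ ^ r) ^ n = 1 := by
      rw [← zpow_natCast, ← zpow_mul, mul_comm, zpow_mul, hζ.zpow_eq_one, one_zpow]
    rw [← Ico_add_one_right_eq_Icc, geom_sum_Ico hne (by omega), pow_succ, hperiod, one_mul,
      pow_one, sub_self, zero_div]

theorem one_sub_pow_mul_one_sub_inv_pow {K : Type*} [Field K] {x : K} (hx : x ≠ 0) (τ : ℕ) :
    (1 - x) ^ τ * (1 - x⁻¹) ^ τ =
      ∑ i ∈ Icc (-τ : ℤ) τ, (-1) ^ i * ((2 * τ).choose (τ + i).toNat : K) * x ^ i := by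
  have hfactor : (1 - x) * (1 - x⁻¹) = (-x)⁻¹ * (1 + -x) ^ 2 := by field_simp; ring
  have hsign : ∀ i : ℤ, (-x) ^ i = (-1) ^ i * x ^ i := fun i => by
    rw [neg_eq_neg_one_mul, mul_zpow]
  calc (1 - x) ^ τ * (1 - x⁻¹) ^ τ = (-x) ^ (-τ : ℤ) * (1 + -x) ^ (2 * τ) := by
        rw [← mul_pow, hfactor, mul_pow, zpow_neg, zpow_natCast, inv_pow, pow_mul]
    _ = ∑ m ∈ range (2 * τ + 1), (-x) ^ ((m : ℤ) - τ) * ((2 * τ).choose m : K) := by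
        rw [add_comm, add_pow, mul_sum]
        refine sum_congr rfl fun m _ => ?_
        rw [one_pow, mul_one, zpow_sub₀ (neg_ne_zero.2 hx), zpow_natCast, zpow_natCast, zpow_neg,
          zpow_natCast, div_eq_mul_inv]
        ring
    _ = _ := by
        refine sum_nbij' (fun m => (m : ℤ) - τ) (fun i => (τ + i).toNat) ?_ ?_ ?_ ?_ ?_
        · intro m hm; simp only [mem_range, mem_Icc] at hm ⊢; omega
        · intro i hi; simp only [mem_range, mem_Icc] at hi ⊢; omega
        · intro m _; simp
        · intro i hi; simp only [mem_Icc] at hi; omega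
        · intro m _
          rw [hsign, show (τ + ((m : ℤ) - τ)).toNat = m by omega]
          ring

theorem IsPrimitiveRoot.sum_Icc_one_sub_pow_mul_one_sub_inv_pow_mul_zpow {K : Type*} [Field K]
    {ζ : K} {n : ℕ} (hζ : IsPrimitiveRoot ζ n) (τ : ℕ) {d : ℤ} (hd : τ + |d| < n) :
    ∑ t ∈ Icc 1 n, (1 - ζ ^ t) ^ τ * (1 - (ζ ^ t)⁻¹) ^ τ * (ζ ^ t) ^ (-d) =
      if |d| ≤ τ then n * (-1) ^ d * ((2 * τ).choose (τ + d).toNat : K) else 0 := by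
  have hζ0 : ζ ≠ 0 := hζ.ne_zero (by have := abs_nonneg d; omega)
  set c : ℤ → K := fun i => (-1) ^ i * ((2 * τ).choose (τ + i).toNat : K)
  calc _ = ∑ t ∈ Icc 1 n, ∑ i ∈ Icc (-τ : ℤ) τ, c i * (ζ ^ t) ^ (i - d) := by
        refine sum_congr rfl fun t _ => ?_
        rw [one_sub_pow_mul_one_sub_inv_pow (pow_ne_zero t hζ0), sum_mul]
        refine sum_congr rfl fun i _ => ?_
        rw [sub_eq_add_neg, zpow_add₀ (pow_ne_zero t hζ0), mul_assoc]
    _ = ∑ i ∈ Icc (-τ : ℤ) τ, c i * ∑ t ∈ Icc 1 n, (ζ ^ t) ^ (i - d) := by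
        rw [sum_comm]
        simp_rw [mul_sum]
    _ = ∑ i ∈ Icc (-τ : ℤ) τ, if d = i then c i * n else 0 := by
        refine sum_congr rfl fun i hi => ?_
        have hlt : |i - d| < n := by
          rw [mem_Icc] at hi
          rw [abs_lt]
          have := le_abs_self d
          have := neg_abs_le d
          omega
        rw [hζ.sum_Icc_pow_zpow_eq_ite]
        by_cases hid : d = i
        · simp [hid]
        · rw [if_neg (mt (fun h => (sub_eq_zero.1 (Int.eq_zero_of_abs_lt_dvd h hlt)).symm) hid),
            if_neg hid, mul_zero]
    _ = _ := by
        rw [sum_ite_eq]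
        simp only [mem_Icc, ← abs_le, c]
        split_ifs <;> ring

theorem integral_sum_mul_conj_sum_eq_of_uncorrelated {ι Ω : Type*} [MeasurableSpace Ω]
    {μ : Measure Ω} {Z : ι → Ω → ℝ} {σ : ℝ}
    (hZ2 : ∀ s t, Integrable (fun ω => Z s ω * Z t ω) μ)
    (huncorr : ∀ s t, s ≠ t → ∫ ω, Z s ω * Z t ω ∂μ = 0)
    (hvar : ∀ t, ∫ ω, Z t ω ^ 2 ∂μ = σ ^ 2) (S : Finset ι) (u v : ι → ℂ) :
    ∫ ω, (∑ s ∈ S, u s * Z s ω) * conj (∑ t ∈ S, v t * Z t ω) ∂μ =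
      σ ^ 2 * ∑ s ∈ S, u s * conj (v s) := by
  classical
  have hcov : ∀ s t, ∫ ω, Z s ω * Z t ω ∂μ = if s = t then σ ^ 2 else 0 := by
    intro s t
    split_ifs with hst
    · subst hst
      simpa only [sq] using hvar s
    · exact huncorr s t hst
  have hint : ∀ s t, Integrable (fun ω => u s * conj (v t) * ((Z s ω * Z t ω : ℝ) : ℂ)) μ :=
    fun s t => (hZ2 s t).ofReal.const_mul _
  calc _ = ∫ ω, ∑ s ∈ S, ∑ t ∈ S, u s * conj (v t) * ((Z s ω * Z t ω : ℝ) : ℂ) ∂μ := by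
        congr 1 with ω
        simp only [map_sum, map_mul, Complex.conj_ofReal, sum_mul_sum, Complex.ofReal_mul]
        exact sum_congr rfl fun s _ => sum_congr rfl fun t _ => by ring
    _ = ∑ s ∈ S, ∑ t ∈ S, u s * conj (v t) * ((∫ ω, Z s ω * Z t ω ∂μ : ℝ) : ℂ) := by
        rw [integral_finsetSum _ fun s _ => integrable_finsetSum _ fun t _ => hint s t]
        refine sum_congr rfl fun s _ => ?_
        rw [integral_finsetSum _ fun t _ => hint s t]
        exact sum_congr rfl fun t _ => by rw [integral_const_mul, integral_complex_ofReal]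
    _ = _ := by
        simp only [hcov, apply_ite, Complex.ofReal_zero, mul_zero, sum_ite_eq, mul_sum]
        exact sum_congr rfl fun s hs => by simp [hs, mul_comm]

theorem Complex.one_sub_pow_mul_pow_mul_conj {x : ℂ} (hx : ‖x‖ = 1) (τ j k : ℕ) :
    (1 - x) ^ τ * x ^ j * conj ((1 - x) ^ τ * x ^ k) =
      (1 - x) ^ τ * (1 - x⁻¹) ^ τ * x ^ (-((k : ℤ) - j)) := by
  have hx0 : x ≠ 0 := norm_ne_zero_iff.1 (by rw [hx]; exact one_ne_zero)
  rw [map_mul, map_pow, map_pow, map_sub, map_one, ← Complex.inv_eq_conj hx, neg_sub,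
    zpow_sub₀ hx0, zpow_natCast, zpow_natCast, inv_pow, div_eq_mul_inv]
  ring

theorem tapered_dft_white_noise_covariance_general
    {Ω : Type*} [MeasurableSpace Ω] (μ : Measure Ω)
    (Z : ℕ → Ω → ℝ) (σ : ℝ) (n τ : ℕ) (hn : 2 * τ < n)
    (hZ2 : ∀ s t, Integrable (fun ω => Z s ω * Z t ω) μ)
    (huncorr : ∀ s t, s ≠ t → ∫ ω, Z s ω * Z t ω ∂μ = 0)
    (hvar : ∀ t, ∫ ω, Z t ω ^ 2 ∂μ = σ ^ 2)
    (h : ℕ → ℂ) (hh : ∀ t, h t = 1 - Complex.exp (2 * π * Complex.I * t / n))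
    (a : ℝ) (ha : a = (n : ℝ)⁻¹ * ∑ t ∈ Finset.Icc 1 n, ‖h t‖ ^ (2 * τ))
    (D : ℝ → Ω → ℂ)
    (hD : ∀ lam ω, D lam ω = (Real.sqrt (2 * π * n * a))⁻¹ *
      ∑ t ∈ Finset.Icc 1 n, (h t) ^ τ * (Z t ω : ℂ) * Complex.exp (Complex.I * t * lam))
    (j k : ℕ)
    (hj2 : j ≤ (n - 1) / 2) (hk2 : k ≤ (n - 1) / 2) :
    ((τ : ℤ) < |(j : ℤ) - k| →
      ∫ ω, D (2 * π * j / n) ω * (starRingEnd ℂ) (D (2 * π * k / n) ω) ∂μ = 0) ∧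
    (|(j : ℤ) - k| ≤ (τ : ℤ) →
      ∫ ω, D (2 * π * j / n) ω * (starRingEnd ℂ) (D (2 * π * k / n) ω) ∂μ
        = ((2 * π * a)⁻¹ * σ ^ 2 : ℝ) * (-1) ^ ((k : ℤ) - j) *
            (Nat.choose (2 * τ) ((τ + (k : ℤ) - j).toNat) : ℂ)) := by
  have hn0 : n ≠ 0 := by omega
  set ζ := Complex.exp (2 * π * Complex.I / n)
  have hζ : IsPrimitiveRoot ζ n := Complex.isPrimitiveRoot_exp n hn0
  set c : ℝ := (√(2 * π * n * a))⁻¹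
  have hDζ (m : ℕ) (ω : Ω) : D (2 * π * m / n) ω =
      c * ∑ t ∈ Icc 1 n, (1 - ζ ^ t) ^ τ * (ζ ^ t) ^ m * Z t ω := by
    rw [hD]
    refine congrArg _ (sum_congr rfl fun t _ => ?_)
    rw [hh, ← pow_mul, ← Complex.exp_nat_mul, ← Complex.exp_nat_mul]
    push_cast
    ring_nf
  have hcov : ∫ ω, D (2 * π * j / n) ω * conj (D (2 * π * k / n) ω) ∂μ =
      (c * c : ℝ) * σ ^ 2 * ∑ t ∈ Icc 1 n,
        (1 - ζ ^ t) ^ τ * (1 - (ζ ^ t)⁻¹) ^ τ * (ζ ^ t) ^ (-((k : ℤ) - j)) := by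
    simp_rw [hDζ, map_mul, Complex.conj_ofReal, mul_mul_mul_comm, integral_const_mul,
      integral_sum_mul_conj_sum_eq_of_uncorrelated hZ2 huncorr hvar, Complex.ofReal_mul,
      mul_assoc (_ * _)]
    refine congrArg _ (congrArg _ (sum_congr rfl fun t _ => ?_))
    exact Complex.one_sub_pow_mul_pow_mul_conj (by rw [norm_pow, hζ.norm'_eq_one hn0, one_pow]) ..
  have hkernel := hζ.sum_Icc_one_sub_pow_mul_one_sub_inv_pow_mul_zpow τ (d := (k : ℤ) - j) (by
    have := abs_sub_le_iff.2
      (⟨by omega, by omega⟩ : (k : ℤ) - j ≤ (n - 1 : ℕ) / 2 ∧ (j : ℤ) - k ≤ (n - 1 : ℕ) / 2)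
    omega)
  have hcc : c * c * n = (2 * π * a)⁻¹ := by
    have ha0 : 0 ≤ 2 * π * n * a := by rw [ha]; positivity
    rw [← mul_inv, Real.mul_self_sqrt ha0, mul_right_comm, mul_inv,
      inv_mul_cancel_right₀ (Nat.cast_ne_zero.2 hn0)]
  rw [hcov, hkernel, abs_sub_comm, add_sub_assoc]
  constructor
  · intro hlt
    rw [if_neg hlt.not_ge, mul_zero]
  · intro hle
    rw [if_pos hle, ← hcc]
    push_cast
    ring

/-- Covariance structure of tapered DFT coefficients of a real white noise:
with `D^Z_τ(λ) = (2πn a_τ)^{−1/2} Σ_{t=1}^n h_t^τ Z_t e^{itλ}`,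
`h_t = 1 − e^{2πit/n}`, `a_τ = n^{−1} Σ_t |h_t|^{2τ}`, the covariance
`E[D^Z_τ(λ_j) conj(D^Z_τ(λ_k))]` vanishes when `|j − k| > τ` and equals
`(2π a_τ)^{−1} σ² (−1)^{k−j} C(2τ, τ+(k−j))` when `|j − k| ≤ τ`. -/
theorem tapered_dft_white_noise_covariance
    {Ω : Type*} [MeasurableSpace Ω] (μ : Measure Ω) [IsProbabilityMeasure μ]
    (Z : ℕ → Ω → ℝ) (σ : ℝ) (n τ : ℕ) (hn : 2 * τ < n) (hτ : 1 ≤ τ)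
    (hZmeas : ∀ t, Measurable (Z t))
    (hZ2 : ∀ s t, Integrable (fun ω => Z s ω * Z t ω) μ)
    (hmean : ∀ t, ∫ ω, Z t ω ∂μ = 0)
    (huncorr : ∀ s t, s ≠ t → ∫ ω, Z s ω * Z t ω ∂μ = 0)
    (hvar : ∀ t, ∫ ω, Z t ω ^ 2 ∂μ = σ ^ 2)
    (h : ℕ → ℂ) (hh : ∀ t, h t = 1 - Complex.exp (2 * π * Complex.I * t / n))
    (a : ℝ) (ha : a = (n : ℝ)⁻¹ * ∑ t ∈ Finset.Icc 1 n, ‖h t‖ ^ (2 * τ))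
    (D : ℝ → Ω → ℂ)
    (hD : ∀ lam ω, D lam ω = (Real.sqrt (2 * π * n * a))⁻¹ *
      ∑ t ∈ Finset.Icc 1 n, (h t) ^ τ * (Z t ω : ℂ) * Complex.exp (Complex.I * t * lam))
    (j k : ℕ) (hj : 1 ≤ j) (hk : 1 ≤ k)
    (hj2 : j ≤ (n - 1) / 2) (hk2 : k ≤ (n - 1) / 2) :
    ((τ : ℤ) < |(j : ℤ) - k| →
      ∫ ω, D (2 * π * j / n) ω * (starRingEnd ℂ) (D (2 * π * k / n) ω) ∂μ = 0) ∧
    (|(j : ℤ) - k| ≤ (τ : ℤ) →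
      ∫ ω, D (2 * π * j / n) ω * (starRingEnd ℂ) (D (2 * π * k / n) ω) ∂μ
        = ((2 * π * a)⁻¹ * σ ^ 2 : ℝ) * (-1) ^ ((k : ℤ) - j) *
            (Nat.choose (2 * τ) ((τ + (k : ℤ) - j).toNat) : ℂ)) :=
  tapered_dft_white_noise_covariance_general μ Z σ n τ hn hZ2 huncorr hvar h hh a ha D hD j k hj2
    hk2
end

section
/- The normalization constant of the Hurvich–Chen taper satisfies a_τ = n^{−1} Σ_{t=1}^n |1 − e^{2πit/n}|^{2τ} = binom(2τ, τ) for all integers n > 2τ ≥ 0. -/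
open Real Finset

/-!
For `‖z‖ = 1` we have `‖1 - z‖ ^ 2 = -(z - 1) ^ 2 * z⁻¹`, so `‖1 - z‖ ^ (2τ)` is the Laurent
polynomial `∑ₖ (-1) ^ (k + τ) * C(2τ, k) * z ^ (k - τ)`, whose exponents lie in `[-τ, τ]`.
Summing over the `n`-th roots of unity kills every `z ^ m` with `n ∤ m`; since `2τ < n`, only the
constant term `k = τ` survives, contributing `n * C(2τ, τ)`.
-/

theorem IsPrimitiveRoot.sum_Icc_pow_zpow {K : Type*} [Field K] {ζ : K} {n : ℕ}
    (hζ : IsPrimitiveRoot ζ n) (m : ℤ) :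
    ∑ t ∈ Icc 1 n, (ζ ^ t) ^ m = if (n : ℤ) ∣ m then (n : K) else 0 := by
  have hcomm (t : ℕ) : (ζ ^ t) ^ m = (ζ ^ m) ^ t := by
    rw [← zpow_natCast, ← zpow_natCast, ← zpow_mul, ← zpow_mul, mul_comm]
  simp_rw [hcomm]
  split_ifs with hdvd
  · simp [(hζ.zpow_eq_one_iff_dvd m).mpr hdvd]
  · have hne : ζ ^ m ≠ 1 := (hζ.zpow_eq_one_iff_dvd m).not.mpr hdvd
    have hperiod : (ζ ^ m) ^ n = 1 := by rw [← hcomm, hζ.pow_eq_one, one_zpow]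
    rw [← Ico_add_one_right_eq_Icc, sum_Ico_eq_sum_range, Nat.add_sub_cancel]
    simp_rw [pow_add, pow_one, ← mul_sum, geom_sum_eq hne, hperiod, sub_self, zero_div, mul_zero]

theorem Complex.ofReal_norm_one_sub_sq {z : ℂ} (hz : ‖z‖ = 1) :
    ((‖1 - z‖ ^ 2 : ℝ) : ℂ) = -(z - 1) ^ 2 * z⁻¹ := by
  have hz0 : z ≠ 0 := by rintro rfl; simp at hz
  rw [Complex.ofReal_pow, ← Complex.mul_conj', map_sub, map_one, ← Complex.inv_eq_conj hz]
  field_simp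
  ring

theorem Complex.ofReal_norm_one_sub_pow_eq_sum {z : ℂ} (hz : ‖z‖ = 1) (τ : ℕ) :
    ((‖1 - z‖ ^ (2 * τ) : ℝ) : ℂ) =
      ∑ k ∈ range (2 * τ + 1), (-1) ^ (k + τ) * (2 * τ).choose k * z ^ ((k : ℤ) - τ) := by
  have hz0 : z ≠ 0 := by rintro rfl; simp at hz
  rw [pow_mul, Complex.ofReal_pow, Complex.ofReal_norm_one_sub_sq hz, mul_pow, neg_pow,
    ← pow_mul, sub_pow, mul_sum, sum_mul]
  refine sum_congr rfl fun k _ => ?_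
  rw [zpow_sub₀ hz0, zpow_natCast, zpow_natCast, inv_pow, one_pow, mul_one, pow_add, pow_add,
    pow_mul, neg_one_sq, one_pow, mul_one]
  ring

theorem Int.natCast_dvd_sub_natCast_iff_eq {n k j : ℕ} (hk : k < n) (hj : j < n) :
    (n : ℤ) ∣ (k : ℤ) - j ↔ k = j := by
  rw [← Nat.modEq_iff_dvd]
  exact ⟨fun h => (h.eq_of_lt_of_lt hj hk).symm, fun h => h ▸ rfl⟩

theorem IsPrimitiveRoot.sum_Icc_norm_one_sub_pow {ζ : ℂ} {n : ℕ} (hζ : IsPrimitiveRoot ζ n)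
    {τ : ℕ} (hn : 2 * τ < n) :
    ∑ t ∈ Icc 1 n, ‖1 - ζ ^ t‖ ^ (2 * τ) = (n : ℝ) * (2 * τ).choose τ := by
  have hnorm (t : ℕ) : ‖ζ ^ t‖ = 1 := by rw [norm_pow, hζ.norm'_eq_one (by omega), one_pow]
  have hdvd (k : ℕ) (hk : k ∈ range (2 * τ + 1)) : (n : ℤ) ∣ (k : ℤ) - τ ↔ k = τ :=
    Int.natCast_dvd_sub_natCast_iff_eq (by grind) (by omega)
  rw [← Complex.ofReal_inj, Complex.ofReal_sum]
  simp_rw [Complex.ofReal_norm_one_sub_pow_eq_sum (hnorm _)]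
  rw [sum_comm]
  simp_rw [← mul_sum, hζ.sum_Icc_pow_zpow, mul_ite, mul_zero]
  rw [sum_congr rfl fun k hk => if_congr (hdvd k hk) rfl rfl, sum_ite_eq',
    if_pos (mem_range.mpr (by omega))]
  push_cast
  rw [← two_mul, pow_mul, neg_one_sq, one_pow, one_mul, mul_comm]

/-- The normalization constant of the Hurvich–Chen taper:
`a_τ = n^{−1} Σ_{t=1}^n |1 − e^{2πit/n}|^{2τ} = C(2τ, τ)` for all `n > 2τ ≥ 0`. -/
theorem hurvich_chen_normalization (n τ : ℕ) (hn : 2 * τ < n) :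
    (n : ℝ)⁻¹ * ∑ t ∈ Finset.Icc 1 n,
        ‖(1 : ℂ) - Complex.exp (2 * π * Complex.I * t / n)‖ ^ (2 * τ)
      = (Nat.choose (2 * τ) τ : ℝ) := by
  have hn0 : n ≠ 0 := by omega
  have hexp (t : ℕ) : Complex.exp (2 * π * Complex.I * t / n)
      = Complex.exp (2 * π * Complex.I / n) ^ t := by
    rw [← Complex.exp_nat_mul]
    ring_nf
  simp_rw [hexp, (Complex.isPrimitiveRoot_exp n hn0).sum_Icc_norm_one_sub_pow hn]
  exact inv_mul_cancel_left₀ (Nat.cast_ne_zero.mpr hn0) _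
end

section
/- The function p ↦ p·ψ'(p), where ψ is the digamma function and p ranges over positive integers, is strictly decreasing, equals π²/6 at p = 1, and tends to 1 as p → ∞; moreover p ψ'(p) = 1 + 1/(2p) + O(p^{−2}). -/
/-!
Compare `ψ'(x) = ∑ₖ (x + k)⁻²` termwise with two telescoping series:
`y⁻² ≤ (y - 1/2)⁻¹ - (y + 1/2)⁻¹`, and `g y - g (y + 1) ≤ y⁻²` for `g y = y⁻¹ + (2y²)⁻¹`.
Hence `x⁻¹ + (2x²)⁻¹ ≤ ψ'(x) ≤ (x - 1/2)⁻¹`, which pins `x ψ'(x)` to within `x⁻²` of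
`1 + 1/(2x)`. By the recurrence `ψ'(x) = x⁻² + ψ'(x + 1)`,
`x ψ'(x) - (x + 1) ψ'(x + 1) = x⁻¹ - ψ'(x + 1)`, which is positive by the upper bound.
The value at `1` is `ζ(2) = π²/6`.
-/

open Real Filter Topology

lemma hasSum_sub_add_one_of_antitoneOn {g : ℝ → ℝ} {x : ℝ} (hg : AntitoneOn g (Set.Ici x))
    (hlim : Tendsto g atTop (𝓝 0)) :
    HasSum (fun k : ℕ => g (x + k) - g (x + k + 1)) (g x) := by
  have hmem (y : ℝ) (hy : 0 ≤ y) : x + y ∈ Set.Ici x := by simpa using hy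
  have hle (k : ℕ) : g (x + k + 1) ≤ g (x + k) :=
    hg (hmem _ k.cast_nonneg) (by simpa [add_assoc] using hmem (k + 1) (by positivity))
      (by linarith)
  rw [hasSum_iff_tendsto_nat_of_nonneg (fun k => sub_nonneg.2 (hle k))]
  have hsum (n : ℕ) :
      ∑ k ∈ Finset.range n, (g (x + k) - g (x + k + 1)) = g x - g (x + n) := by
    simpa [add_assoc] using Finset.sum_range_sub' (fun k : ℕ => g (x + k)) n
  simp_rw [hsum]
  have hshift : Tendsto (fun n : ℕ => x + n) atTop atTop :=
    tendsto_atTop_add_const_left _ _ tendsto_natCast_atTop_atTop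
  simpa using tendsto_const_nhds.sub (hlim.comp hshift)

lemma one_div_sq_le_inv_sub_half_sub_inv_add_half {y : ℝ} (hy : 1 / 2 < y) :
    1 / y ^ 2 ≤ (y - 1 / 2)⁻¹ - (y + 1 / 2)⁻¹ := by
  rw [inv_sub_inv (by linarith) (by linarith), add_sub_sub_cancel, add_halves]
  exact one_div_le_one_div_of_le (by nlinarith) (by nlinarith)

lemma inv_add_inv_two_mul_sq_sub_le_one_div_sq {y : ℝ} (hy : 0 < y) :
    (y⁻¹ + (2 * y ^ 2)⁻¹) - ((y + 1)⁻¹ + (2 * (y + 1) ^ 2)⁻¹) ≤ 1 / y ^ 2 := by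
  rw [sub_le_iff_le_add]
  field_simp
  nlinarith [sq_nonneg y]

lemma hasSum_inv_sub_half {x : ℝ} (hx : 1 / 2 < x) :
    HasSum (fun k : ℕ => (x + k - 1 / 2)⁻¹ - (x + k + 1 / 2)⁻¹) (x - 1 / 2)⁻¹ := by
  convert hasSum_sub_add_one_of_antitoneOn (g := fun y => (y - 1 / 2)⁻¹)
    (fun a ha b _ hab => inv_anti₀ (by linarith [Set.mem_Ici.1 ha]) (by linarith))
    (tendsto_inv_atTop_zero.comp (tendsto_atTop_add_const_right _ _ tendsto_id)) using 3 with k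
  ring

lemma hasSum_inv_add_inv_two_mul_sq {x : ℝ} (hx : 0 < x) :
    HasSum (fun k : ℕ =>
        ((x + k)⁻¹ + (2 * (x + k) ^ 2)⁻¹) - ((x + k + 1)⁻¹ + (2 * (x + k + 1) ^ 2)⁻¹))
      (x⁻¹ + (2 * x ^ 2)⁻¹) := by
  refine hasSum_sub_add_one_of_antitoneOn (g := fun y => y⁻¹ + (2 * y ^ 2)⁻¹) ?_ ?_
  · intro a ha b _ hab
    have ha : 0 < a := hx.trans_le ha
    dsimp only
    gcongr
  · have h2 : Tendsto (fun y : ℝ => 2 * y ^ 2) atTop atTop :=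
      (tendsto_pow_atTop two_ne_zero).const_mul_atTop two_pos
    simpa using tendsto_inv_atTop_zero.add (tendsto_inv_atTop_zero.comp h2)

noncomputable def trigamma (x : ℝ) : ℝ := ∑' k : ℕ, 1 / (x + k) ^ 2

lemma summable_one_div_add_sq {x : ℝ} (hx : 1 / 2 < x) :
    Summable (fun k : ℕ => 1 / (x + k) ^ 2) :=
  (hasSum_inv_sub_half hx).summable.of_nonneg_of_le (fun k => by positivity) fun k =>
    one_div_sq_le_inv_sub_half_sub_inv_add_half (by linarith [k.cast_nonneg (α := ℝ)])

lemma trigamma_le_inv_sub_half {x : ℝ} (hx : 1 / 2 < x) : trigamma x ≤ (x - 1 / 2)⁻¹ :=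
  hasSum_le
    (fun k => one_div_sq_le_inv_sub_half_sub_inv_add_half (by linarith [k.cast_nonneg (α := ℝ)]))
    (summable_one_div_add_sq hx).hasSum (hasSum_inv_sub_half hx)

lemma inv_add_inv_two_mul_sq_le_trigamma {x : ℝ} (hx : 1 / 2 < x) :
    x⁻¹ + (2 * x ^ 2)⁻¹ ≤ trigamma x :=
  hasSum_le
    (fun k => inv_add_inv_two_mul_sq_sub_le_one_div_sq (by linarith [k.cast_nonneg (α := ℝ)]))
    (hasSum_inv_add_inv_two_mul_sq (by linarith)) (summable_one_div_add_sq hx).hasSum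

lemma trigamma_eq_one_div_sq_add_trigamma_add_one {x : ℝ} (hx : 1 / 2 < x) :
    trigamma x = 1 / x ^ 2 + trigamma (x + 1) := by
  rw [trigamma, (summable_one_div_add_sq hx).tsum_eq_zero_add, trigamma]
  simp only [Nat.cast_add_one, CharP.cast_eq_zero, add_zero, add_assoc, add_comm (1 : ℝ)]

lemma trigamma_one : trigamma 1 = π ^ 2 / 6 := by
  rw [← hasSum_zeta_two.tsum_eq, hasSum_zeta_two.summable.tsum_eq_zero_add, trigamma]
  simp [add_comm]

lemma mul_trigamma_add_one_lt {x : ℝ} (hx : 1 / 2 < x) :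
    (x + 1) * trigamma (x + 1) < x * trigamma x := by
  have hlt : trigamma (x + 1) < x⁻¹ :=
    (trigamma_le_inv_sub_half (by linarith)).trans_lt (inv_strictAnti₀ (by linarith) (by linarith))
  have hdiff : x * (1 / x ^ 2 + trigamma (x + 1)) - (x + 1) * trigamma (x + 1)
      = x⁻¹ - trigamma (x + 1) := by
    field_simp
    ring
  rw [trigamma_eq_one_div_sq_add_trigamma_add_one hx]
  linarith

lemma abs_mul_trigamma_sub_le {x : ℝ} (hx : 1 ≤ x) :
    |x * trigamma x - (1 + 1 / (2 * x))| ≤ (x ^ 2)⁻¹ := by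
  have hx0 : 0 < x := by linarith
  have hlow : 1 + 1 / (2 * x) ≤ x * trigamma x := by
    calc 1 + 1 / (2 * x) = x * (x⁻¹ + (2 * x ^ 2)⁻¹) := by field_simp
      _ ≤ x * trigamma x := by gcongr; exact inv_add_inv_two_mul_sq_le_trigamma (by linarith)
  have hup : x * trigamma x ≤ 1 + 1 / (2 * x) + (x ^ 2)⁻¹ := by
    calc x * trigamma x ≤ x * (x - 1 / 2)⁻¹ := by
          gcongr; exact trigamma_le_inv_sub_half (by linarith)
      _ ≤ 1 + 1 / (2 * x) + (x ^ 2)⁻¹ := by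
        rw [← div_eq_mul_inv, div_le_iff₀ (by linarith)]
        field_simp
        nlinarith
  rw [abs_of_nonneg (by linarith)]
  linarith

/-- The map `p ↦ p·ψ'(p)` (trigamma at positive integers) is strictly decreasing,
equals `π²/6` at `p = 1`, tends to `1` at infinity, and
`p ψ'(p) = 1 + 1/(2p) + O(p^{−2})`. -/
theorem trigamma_times_p_properties
    (F : ℕ → ℝ) (hF : ∀ p : ℕ, F p = p * ∑' k : ℕ, (1 : ℝ) / ((p : ℝ) + k) ^ 2) :
    (∀ p : ℕ, 1 ≤ p → F (p + 1) < F p) ∧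
    F 1 = π ^ 2 / 6 ∧
    Tendsto F atTop (nhds 1) ∧
    (fun p : ℕ => F p - (1 + 1 / (2 * (p : ℝ)))) =O[atTop] fun p : ℕ => ((p : ℝ) ^ 2)⁻¹ := by
  obtain rfl : F = fun p : ℕ => p * trigamma p := funext hF
  have hbigO : (fun p : ℕ => p * trigamma p - (1 + 1 / (2 * (p : ℝ)))) =O[atTop]
      fun p : ℕ => ((p : ℝ) ^ 2)⁻¹ := by
    refine Asymptotics.IsBigO.of_bound 1 ?_
    filter_upwards [eventually_ge_atTop 1] with p hp
    simpa [abs_of_nonneg] using abs_mul_trigamma_sub_le (Nat.one_le_cast.2 hp)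
  have hinv_sq : Tendsto (fun p : ℕ => ((p : ℝ) ^ 2)⁻¹) atTop (𝓝 0) :=
    tendsto_inv_atTop_zero.comp
      ((tendsto_pow_atTop two_ne_zero).comp tendsto_natCast_atTop_atTop)
  have hlead : Tendsto (fun p : ℕ => 1 + 1 / (2 * (p : ℝ))) atTop (𝓝 1) := by
    simpa using tendsto_const_nhds.add (tendsto_inv_atTop_zero.comp
      ((tendsto_natCast_atTop_atTop (R := ℝ)).const_mul_atTop two_pos))
  refine ⟨fun p hp => ?_, by simpa using trigamma_one, ?_, hbigO⟩
  · have hp : (1 : ℝ) ≤ p := Nat.one_le_cast.2 hp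
    exact_mod_cast mul_trigamma_add_one_lt (by linarith : 1 / 2 < (p : ℝ))
  · simpa using (hbigO.trans_tendsto hinv_sq).add hlead
end

section
/- The variance-inflation factor Φ(τ) = Γ(4τ+1) Γ(τ+1)^4 / Γ(2τ+1)^4 satisfies Φ(0) = 1, Φ(1) = 3/2, Φ(2) = 35/18, and Φ is strictly increasing on nonnegative integers τ. -/
open Real

/-- The variance-inflation factor `Φ(τ) = Γ(4τ+1) Γ(τ+1)^4 / Γ(2τ+1)^4`. -/
noncomputable def Phi (τ : ℕ) : ℝ :=
  Real.Gamma (4 * τ + 1) * Real.Gamma (τ + 1) ^ 4 / Real.Gamma (2 * τ + 1) ^ 4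

lemma Phi_eq (τ : ℕ) :
    Phi τ = ((4 * τ).factorial * (τ.factorial : ℝ) ^ 4) / ((2 * τ).factorial : ℝ) ^ 4 := by
  unfold Phi
  rw [show (4 * (τ : ℝ) + 1) = ((4 * τ : ℕ) : ℝ) + 1 by push_cast; ring,
      show ((τ : ℝ) + 1) = ((τ : ℕ) : ℝ) + 1 by push_cast; ring,
      show (2 * (τ : ℝ) + 1) = ((2 * τ : ℕ) : ℝ) + 1 by push_cast; ring,
      Real.Gamma_nat_eq_factorial, Real.Gamma_nat_eq_factorial,
      Real.Gamma_nat_eq_factorial]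

lemma key (n : ℕ) :
    (4 * n).factorial * n.factorial ^ 4 * (2 * n + 2).factorial ^ 4 <
      (4 * n + 4).factorial * (n + 1).factorial ^ 4 * (2 * n).factorial ^ 4 := by
  have h1 : (4 * n + 4).factorial =
      (4 * n + 4) * ((4 * n + 3) * ((4 * n + 2) * ((4 * n + 1) * (4 * n).factorial))) := by
    rw [show 4 * n + 4 = (4 * n + 3) + 1 from rfl, Nat.factorial_succ,
        show 4 * n + 3 = (4 * n + 2) + 1 from rfl, Nat.factorial_succ,
        show 4 * n + 2 = (4 * n + 1) + 1 from rfl, Nat.factorial_succ,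
        Nat.factorial_succ]
  have h2 : (2 * n + 2).factorial = (2 * n + 2) * ((2 * n + 1) * (2 * n).factorial) := by
    rw [show 2 * n + 2 = (2 * n + 1) + 1 from rfl, Nat.factorial_succ, Nat.factorial_succ]
  have h3 : (n + 1).factorial = (n + 1) * n.factorial := Nat.factorial_succ n
  rw [h1, h2, h3]
  have hpoly : ((2 * n + 2) * (2 * n + 1)) ^ 4 <
      (4 * n + 4) * ((4 * n + 3) * ((4 * n + 2) * (4 * n + 1))) * (n + 1) ^ 4 := by
    have hineq : (4 * n + 4) * ((4 * n + 3) * ((4 * n + 2) * (4 * n + 1))) * (n + 1) ^ 4 =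
        ((2 * n + 2) * (2 * n + 1)) ^ 4 + 8 * (2 * n + 1) * (n + 1) ^ 4 *
          (8 * n ^ 2 + 7 * n + 1) := by ring
    rw [hineq]
    exact Nat.lt_add_of_pos_right (by positivity)
  calc (4 * n).factorial * n.factorial ^ 4 *
        ((2 * n + 2) * ((2 * n + 1) * (2 * n).factorial)) ^ 4
      = ((2 * n + 2) * (2 * n + 1)) ^ 4 *
          ((4 * n).factorial * n.factorial ^ 4 * (2 * n).factorial ^ 4) := by ring
    _ < ((4 * n + 4) * ((4 * n + 3) * ((4 * n + 2) * (4 * n + 1))) * (n + 1) ^ 4) *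
          ((4 * n).factorial * n.factorial ^ 4 * (2 * n).factorial ^ 4) := by
        have hpos : 0 < (4 * n).factorial * n.factorial ^ 4 * (2 * n).factorial ^ 4 := by
          positivity
        exact Nat.mul_lt_mul_of_lt_of_le hpoly le_rfl hpos
    _ = (4 * n + 4) * ((4 * n + 3) * ((4 * n + 2) * ((4 * n + 1) * (4 * n).factorial))) *
          ((n + 1) * n.factorial) ^ 4 * (2 * n).factorial ^ 4 := by ring

/-- `Φ(0) = 1`, `Φ(1) = 3/2`, `Φ(2) = 35/18`, and `Φ` is strictly increasing on
nonnegative integers. -/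
theorem Phi_values_and_strictMono :
    Phi 0 = 1 ∧ Phi 1 = 3 / 2 ∧ Phi 2 = 35 / 18 ∧ StrictMono Phi := by
  refine ⟨?_, ?_, ?_, ?_⟩
  · rw [Phi_eq]; norm_num [Nat.factorial]
  · rw [Phi_eq]; norm_num [Nat.factorial]
  · rw [Phi_eq]; norm_num [Nat.factorial]
  · apply strictMono_nat_of_lt_succ
    intro n
    rw [Phi_eq, Phi_eq]
    have h1 : (0 : ℝ) < ((2 * n).factorial : ℝ) ^ 4 := by positivity
    have h2 : (0 : ℝ) < ((2 * (n + 1)).factorial : ℝ) ^ 4 := by positivity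
    rw [div_lt_div_iff₀ h1 h2]
    have hn : 2 * (n + 1) = 2 * n + 2 := by ring
    have hn4 : 4 * (n + 1) = 4 * n + 4 := by ring
    rw [hn, hn4]
    exact_mod_cast key n
end
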